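/- An element g ∈ SU(2,2) maps the set of planes {column span of (I₂ ; A) : A ∈ M₂(ℂ) hermitian} into itself if and only if g has the block form (L 0; NL (L†)⁻¹) with L ∈ GL(2,ℂ), N hermitian (N† = N) and det L ∈ ℝ; for such g, the action in the coordinate A is A ↦ N + (L†)⁻¹ A L⁻¹ (which is again hermitian). -/

import Mathlib

open Matrix

/-- The block matrix (L M; N R) viewed as a 4×4 matrix with respect to the
decomposition ℂ⁴ = span{e₁,e₂} ⊕ span{e₃,e₄}. -/
def blk (L M N R : Matrix (Fin 2) (Fin 2) ℂ) : Matrix (Fin 4) (Fin 4) ℂ :=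
  Matrix.reindex finSumFinEquiv finSumFinEquiv (Matrix.fromBlocks L M N R)

/-- The matrix F = (0 I₂; −I₂ 0) of the hermitian form of signature (2,2) defining
SU(2,2) = {g ∈ SL(4,ℂ) : g† F g = F}. -/
def Fmat : Matrix (Fin 4) (Fin 4) ℂ := blk 0 1 (-1) 0

/-- The 4×2 block matrix (I₂ ; A). -/
def colMat (A : Matrix (Fin 2) (Fin 2) ℂ) : Matrix (Fin 4) (Fin 2) ℂ :=
  Matrix.reindex finSumFinEquiv (Equiv.refl (Fin 2))
    (Matrix.fromRows (1 : Matrix (Fin 2) (Fin 2) ℂ) A)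

/-- The column span of (I₂ ; A). -/
noncomputable def colSpan (A : Matrix (Fin 2) (Fin 2) ℂ) : Submodule ℂ (Fin 4 → ℂ) :=
  LinearMap.range (Matrix.toLin' (colMat A))

/-
Write `g = (a b; c d)`. If `g` maps every graph `(I₂ ; A)`, `A` hermitian, to a graph, then
`a + b A` is invertible for every hermitian `A`. From `g F g† = F`, the matrix `P = a⁻¹ b` is
hermitian, and a nonzero hermitian `P` admits a hermitian `A = -(v† P v)⁻¹ v v†` with `1 + P A`
singular; hence `b = 0`. Then `g† F g = F` says `a† d = 1` and `a† c = c† a`, i.e. `d = (a†)⁻¹`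
and `N = c a⁻¹` is hermitian, while `det g = det a / conj (det a) = 1` makes `det a` real.
-/

namespace Matrix

variable {R m n k : Type*}

theorem exists_eq_mul_of_range_toLin'_le [CommSemiring R] [Fintype n] [DecidableEq n]
    [Fintype k] [DecidableEq k] {M : Matrix m n R} {N : Matrix m k R}
    (h : LinearMap.range M.toLin' ≤ LinearMap.range N.toLin') :
    ∃ X : Matrix k n R, M = N * X := by
  choose x hx using fun j : n => h ⟨Pi.single j 1, rfl⟩
  refine ⟨(of x)ᵀ, ext_of_mulVec_single fun j => ?_⟩
  have hxj := hx j
  rw [toLin'_apply, toLin'_apply, mulVec_single_one] at hxj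
  rw [← mulVec_mulVec, mulVec_single_one, mulVec_single_one, ← hxj]
  rfl

theorem range_toLin'_mul_of_isUnit [CommRing R] [Fintype n] [DecidableEq n] (M : Matrix m n R)
    {X : Matrix n n R} (hX : IsUnit X) :
    LinearMap.range (M * X).toLin' = LinearMap.range M.toLin' := by
  rw [toLin'_mul, LinearMap.range_comp_of_range_eq_top]
  exact LinearMap.range_eq_top.2 ((Module.End.isUnit_iff _).1 (isUnit_toLin'_iff.2 hX)).2

theorem mul_inv_mul_conjTranspose_eq_inv [CommRing R] [StarRing R] [Fintype n] [DecidableEq n]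
    {g F : Matrix n n R} (hF : IsUnit F) (h : gᴴ * F * g = F) : g * F⁻¹ * gᴴ = F⁻¹ := by
  have hF' := (isUnit_iff_isUnit_det F).1 hF
  have hleft : F⁻¹ * gᴴ * F * g = 1 := by
    rw [mul_assoc, mul_assoc, ← mul_assoc gᴴ, h, nonsing_inv_mul _ hF']
  have hright : g * (F⁻¹ * gᴴ * F) = 1 := mul_eq_one_comm.1 hleft
  calc g * F⁻¹ * gᴴ = g * (F⁻¹ * gᴴ * F) * F⁻¹ := by
        simp only [mul_assoc, mul_nonsing_inv _ hF', mul_one]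
    _ = F⁻¹ := by rw [hright, one_mul]

theorem isHermitian_mul_inv_of_conjTranspose_mul_comm [CommRing R] [StarRing R] [Fintype n]
    [DecidableEq n] {a c : Matrix n n R} (ha : IsUnit a) (h : aᴴ * c = cᴴ * a) :
    (c * a⁻¹).IsHermitian := by
  have ha' := (isUnit_iff_isUnit_det a).1 ha
  have haH : IsUnit aᴴ.det := by rw [det_conjTranspose]; exact ha'.star
  have hc : cᴴ = aᴴ * (c * a⁻¹) := by
    rw [← mul_assoc, h, mul_assoc, mul_nonsing_inv _ ha', mul_one]
  rw [IsHermitian, conjTranspose_mul, conjTranspose_nonsing_inv, hc, ← mul_assoc,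
    nonsing_inv_mul _ haH, one_mul]

theorem star_det_eq_det_of_conjTranspose_mul_eq_one [CommRing R] [StarRing R] [Fintype n]
    [DecidableEq n] {a d : Matrix n n R} (hdet : a.det * d.det = 1) (had : aᴴ * d = 1) :
    star a.det = a.det := by
  have hstar : star a.det * d.det = 1 := by rw [← det_conjTranspose, ← det_mul, had, det_one]
  exact (IsUnit.of_mul_eq_one_right _ hdet).mul_left_injective (hstar.trans hdet.symm)

variable [Fintype n] [DecidableEq n]

theorem exists_star_dotProduct_mulVec_ne_zero {P : Matrix n n ℂ} (hP : P ≠ 0) :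
    ∃ v : n → ℂ, star v ⬝ᵥ (P *ᵥ v) ≠ 0 := by
  by_contra! h
  refine hP (toEuclideanLin.injective ?_)
  rw [map_zero, ← inner_map_self_eq_zero]
  intro x
  rw [EuclideanSpace.inner_eq_star_dotProduct, dotProduct_comm, star_dotProduct]
  simp [h]

theorem IsHermitian.eq_zero_of_forall_isUnit_one_add_mul {P : Matrix n n ℂ}
    (hP : P.IsHermitian) (h : ∀ A : Matrix n n ℂ, A.IsHermitian → IsUnit (1 + P * A)) :
    P = 0 := by
  by_contra hne
  obtain ⟨v, hq⟩ := exists_star_dotProduct_mulVec_ne_zero hne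
  set q := star v ⬝ᵥ (P *ᵥ v)
  have hq_real : star q = q := by
    rw [← star_dotProduct_star, star_star, star_mulVec, hP.eq]
    exact (dotProduct_mulVec _ _ _).symm
  set A : Matrix n n ℂ := -q⁻¹ • vecMulVec v (star v)
  have hA : A.IsHermitian := by
    simp [A, IsHermitian, conjTranspose_smul, conjTranspose_vecMulVec, hq_real]
  have hv : v ≠ 0 := by rintro rfl; simp [q] at hq
  -- `A` is chosen so that `1 + A * P` kills `v`; Sylvester's identity passes this to `1 + P * A`.
  have hker : (1 + A * P) *ᵥ v = 0 := by
    rw [add_mulVec, one_mulVec, ← mulVec_mulVec, smul_mulVec, vecMulVec_mulVec]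
    simp [q, hq]
  have hdet := h A hA
  rw [isUnit_iff_isUnit_det, det_one_add_mul_comm,
    exists_mulVec_eq_zero_iff.1 ⟨v, hv, hker⟩] at hdet
  exact not_isUnit_zero hdet

theorem eq_zero_of_forall_isUnit_add_mul {a b : Matrix n n ℂ} (hab : a * bᴴ = b * aᴴ)
    (h : ∀ A : Matrix n n ℂ, A.IsHermitian → IsUnit (a + b * A)) : b = 0 := by
  have ha : IsUnit a.det := (isUnit_iff_isUnit_det a).1 (by simpa using h 0 isHermitian_zero)
  have haH : IsUnit aᴴ.det := by rw [det_conjTranspose]; exact ha.star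
  have hP : (a⁻¹ * b).IsHermitian := by
    have hb : bᴴ = a⁻¹ * (b * aᴴ) := by rw [← hab, ← mul_assoc, nonsing_inv_mul _ ha, one_mul]
    rw [IsHermitian, conjTranspose_mul, conjTranspose_nonsing_inv, hb, mul_assoc, mul_assoc,
      mul_nonsing_inv _ haH, mul_one]
  have hfactor : ∀ A : Matrix n n ℂ, a + b * A = a * (1 + a⁻¹ * b * A) := fun A => by
    rw [mul_add, mul_one, ← mul_assoc, ← mul_assoc, mul_nonsing_inv _ ha, one_mul]
  have hP0 : a⁻¹ * b = 0 := hP.eq_zero_of_forall_isUnit_one_add_mul fun A hA => by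
    have hu := h A hA
    rw [hfactor, isUnit_iff_isUnit_det, det_mul, IsUnit.mul_iff] at hu
    exact (isUnit_iff_isUnit_det _).2 hu.2
  rw [← one_mul b, ← mul_nonsing_inv _ ha, mul_assoc, hP0, mul_zero]

end Matrix

local notation "M₂" => Matrix (Fin 2) (Fin 2) ℂ

def stack (U V : M₂) : Matrix (Fin 4) (Fin 2) ℂ :=
  reindex finSumFinEquiv (Equiv.refl (Fin 2)) (fromRows U V)

theorem colMat_eq_stack (A : M₂) : colMat A = stack 1 A := rfl

theorem stack_inj {U V U' V' : M₂} : stack U V = stack U' V' ↔ U = U' ∧ V = V' := by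
  refine ⟨fun h => ?_, fun ⟨hU, hV⟩ => hU ▸ hV ▸ rfl⟩
  have h' := (reindex finSumFinEquiv (Equiv.refl (Fin 2))).injective h
  exact ⟨congrArg toRows₁ h', congrArg toRows₂ h'⟩

theorem stack_mul (U V X : M₂) : stack U V * X = stack (U * X) (V * X) := by
  rw [stack, stack, ← fromRows_mul]
  rfl

theorem blk_mul (a b c d a' b' c' d' : M₂) :
    blk a b c d * blk a' b' c' d' =
      blk (a * a' + b * c') (a * b' + b * d') (c * a' + d * c') (c * b' + d * d') := by
  simp only [blk, reindex_apply, submatrix_mul_equiv, fromBlocks_multiply]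

theorem blk_mul_stack (a b c d U V : M₂) :
    blk a b c d * stack U V = stack (a * U + b * V) (c * U + d * V) := by
  simp only [blk, stack, reindex_apply, submatrix_mul_equiv, fromBlocks_mul_fromRows]

theorem blk_conjTranspose (a b c d : M₂) : (blk a b c d)ᴴ = blk aᴴ cᴴ bᴴ dᴴ := by
  simp only [blk, reindex_apply, conjTranspose_submatrix, fromBlocks_conjTranspose]

theorem blk_inj {a b c d a' b' c' d' : M₂} :
    blk a b c d = blk a' b' c' d' ↔ a = a' ∧ b = b' ∧ c = c' ∧ d = d' := by
  refine ⟨fun h => ?_, fun ⟨ha, hb, hc, hd⟩ => ha ▸ hb ▸ hc ▸ hd ▸ rfl⟩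
  have h' := (reindex finSumFinEquiv finSumFinEquiv).injective h
  exact ⟨by simpa using congrArg toBlocks₁₁ h', by simpa using congrArg toBlocks₁₂ h',
    by simpa using congrArg toBlocks₂₁ h', by simpa using congrArg toBlocks₂₂ h'⟩

theorem exists_eq_blk (g : Matrix (Fin 4) (Fin 4) ℂ) : ∃ a b c d : M₂, g = blk a b c d := by
  let G : Matrix (Fin 2 ⊕ Fin 2) (Fin 2 ⊕ Fin 2) ℂ :=
    (reindex finSumFinEquiv finSumFinEquiv).symm g
  refine ⟨G.toBlocks₁₁, G.toBlocks₁₂, G.toBlocks₂₁, G.toBlocks₂₂, ?_⟩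
  rw [blk, fromBlocks_toBlocks, Equiv.apply_symm_apply]

theorem det_blk_zero₁₂ (a c d : M₂) : (blk a 0 c d).det = a.det * d.det := by
  rw [blk, reindex_apply, det_submatrix_equiv_self, det_fromBlocks_zero₁₂]

theorem blk_one : blk 1 0 0 1 = 1 := by
  rw [blk, fromBlocks_one, reindex_apply, submatrix_one_equiv]

theorem blk_neg (a b c d : M₂) : -blk a b c d = blk (-a) (-b) (-c) (-d) := by
  rw [blk, blk, ← fromBlocks_neg, reindex_apply, reindex_apply]
  rfl

theorem Fmat_mul_Fmat : Fmat * Fmat = -1 := by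
  rw [Fmat, blk_mul, ← blk_one, blk_neg]
  simp

theorem blk_relations_of_preserves_Fmat {a b c d : M₂}
    (h : (blk a b c d)ᴴ * Fmat * blk a b c d = Fmat) :
    aᴴ * c = cᴴ * a ∧ aᴴ * d - cᴴ * b = 1 ∧ a * bᴴ = b * aᴴ := by
  have hFF : Fmat * -Fmat = 1 := by rw [mul_neg, Fmat_mul_Fmat, neg_neg]
  have h' := mul_inv_mul_conjTranspose_eq_inv (IsUnit.of_mul_eq_one _ hFF) h
  rw [inv_eq_right_inv hFF, mul_neg, neg_mul, neg_inj] at h'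
  rw [Fmat, blk_conjTranspose, blk_mul, blk_mul] at h h'
  obtain ⟨h₁₁, h₁₂, -, -⟩ := blk_inj.1 h
  obtain ⟨h'₁₁, -, -, -⟩ := blk_inj.1 h'
  simp only [mul_zero, mul_one, mul_neg, neg_mul, add_zero, zero_add] at h₁₁ h₁₂ h'₁₁
  rw [neg_add_eq_sub] at h₁₂
  exact ⟨(neg_add_eq_zero.1 h₁₁).symm, h₁₂, (neg_add_eq_zero.1 h'₁₁).symm⟩

theorem colSpan_map (g : Matrix (Fin 4) (Fin 4) ℂ) (A : M₂) :
    (colSpan A).map g.toLin' = LinearMap.range (g * colMat A).toLin' := by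
  rw [colSpan, toLin'_mul, LinearMap.range_comp]

theorem isUnit_add_mul_of_map_colSpan_eq {a b c d A A' : M₂}
    (h : (colSpan A).map (blk a b c d).toLin' = colSpan A') : IsUnit (a + b * A) := by
  rw [colSpan_map, colSpan] at h
  obtain ⟨Y, hY⟩ := exists_eq_mul_of_range_toLin'_le h.ge
  rw [colMat_eq_stack, colMat_eq_stack, blk_mul_stack, stack_mul] at hY
  exact IsUnit.of_mul_eq_one Y (by simpa using (stack_inj.1 hY).1.symm)

theorem map_colSpan_blk {L N : M₂} (hL : IsUnit L) (A : M₂) :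
    (colSpan A).map (blk L 0 (N * L) (Lᴴ)⁻¹).toLin' = colSpan (N + (Lᴴ)⁻¹ * A * L⁻¹) := by
  have hL' := (isUnit_iff_isUnit_det L).1 hL
  have hcol : blk L 0 (N * L) (Lᴴ)⁻¹ * colMat A = colMat (N + (Lᴴ)⁻¹ * A * L⁻¹) * L := by
    rw [colMat_eq_stack, colMat_eq_stack, blk_mul_stack, stack_mul, add_mul,
      mul_assoc _ L⁻¹, nonsing_inv_mul _ hL']
    simp
  rw [colSpan_map, hcol, range_toLin'_mul_of_isUnit _ hL, colSpan]

/-- g ∈ SU(2,2) maps the set of planes {col span (I₂;A) : A hermitian}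
into itself iff g = (L 0; NL (L†)⁻¹) with L invertible, N hermitian and det L real;
for such g, the action is A ↦ N + (L†)⁻¹ A L⁻¹, which is again hermitian. -/
theorem stmt_16 :
    ∀ g : Matrix (Fin 4) (Fin 4) ℂ, g.det = 1 → gᴴ * Fmat * g = Fmat →
      ((∀ A : Matrix (Fin 2) (Fin 2) ℂ, Aᴴ = A →
          ∃ A' : Matrix (Fin 2) (Fin 2) ℂ, A'ᴴ = A' ∧
            (colSpan A).map (Matrix.toLin' g) = colSpan A') ↔
        ∃ L N : Matrix (Fin 2) (Fin 2) ℂ, IsUnit L ∧ Nᴴ = N ∧ (L.det).im = 0 ∧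
          g = blk L 0 (N * L) (Lᴴ)⁻¹ ∧
          ∀ A : Matrix (Fin 2) (Fin 2) ℂ, Aᴴ = A →
            (colSpan A).map (Matrix.toLin' g) = colSpan (N + (Lᴴ)⁻¹ * A * L⁻¹) ∧
            (N + (Lᴴ)⁻¹ * A * L⁻¹)ᴴ = N + (Lᴴ)⁻¹ * A * L⁻¹) := by
  intro g hdet hF
  obtain ⟨a, b, c, d, rfl⟩ := exists_eq_blk g
  refine ⟨fun hpres => ?_, fun ⟨L, N, _, _, _, _, hact⟩ A hA => ⟨_, (hact A hA).2, (hact A hA).1⟩⟩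
  have hunit (A : M₂) (hA : A.IsHermitian) : IsUnit (a + b * A) :=
    have ⟨_, _, hA'⟩ := hpres A hA
    isUnit_add_mul_of_map_colSpan_eq hA'
  have ha : IsUnit a := by simpa using hunit 0 isHermitian_zero
  obtain ⟨hac, had, hab⟩ := blk_relations_of_preserves_Fmat hF
  obtain rfl : b = 0 := eq_zero_of_forall_isUnit_add_mul hab hunit
  rw [mul_zero, sub_zero] at had
  obtain rfl : d = (aᴴ)⁻¹ := (inv_eq_right_inv had).symm
  rw [det_blk_zero₁₂] at hdet
  have hN := isHermitian_mul_inv_of_conjTranspose_mul_comm ha hac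
  have hc : c * a⁻¹ * a = c := by
    rw [mul_assoc, nonsing_inv_mul _ ((isUnit_iff_isUnit_det a).1 ha), mul_one]
  rw [← hc]
  refine ⟨a, c * a⁻¹, ha, hN, ?_, rfl, fun A hA => ⟨map_colSpan_blk ha A, ?_⟩⟩
  · exact Complex.conj_eq_iff_im.1 (star_det_eq_det_of_conjTranspose_mul_eq_one hdet had)
  · rw [← conjTranspose_nonsing_inv]
    exact hN.add (isHermitian_conjTranspose_mul_mul _ hA)
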